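/- F_v(J_5, J_5; 5) ≤ 36. -/

import Mathlib

open SimpleGraph

/-- `Copies G F S`: `G` contains a copy of `F` all of whose vertices lie in `S`. -/
def Copies {α β : Type*} (G : SimpleGraph α) (F : SimpleGraph β) (S : Set α) : Prop :=
  ∃ f : β ↪ α, (∀ a b, F.Adj a b → G.Adj (f a) (f b)) ∧ ∀ a, f a ∈ S

/-- `G` vertex-arrows the family `F` of graphs. -/
def VArrows {α : Type*} (G : SimpleGraph α) {r : ℕ} {β : Fin r → Type*}
    (F : ∀ i, SimpleGraph (β i)) : Prop :=
  ∀ C : α → Fin r, ∃ i, Copies G (F i) {v | C v = i}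

/-- `G` vertex-arrows `(F1, F2)`. -/
def VArrows2 {α β γ : Type*} (G : SimpleGraph α) (F1 : SimpleGraph β) (F2 : SimpleGraph γ) :
    Prop :=
  ∀ C : α → Bool, Copies G F1 {v | C v = true} ∨ Copies G F2 {v | C v = false}

/-- `G` edge-arrows `(F1, F2)`: every red subgraph `R ≤ G` yields a red `F1` or a blue `F2`. -/
def EArrows2 {α β γ : Type*} (G : SimpleGraph α) (F1 : SimpleGraph β) (F2 : SimpleGraph γ) :
    Prop :=
  ∀ R : SimpleGraph α, R ≤ G → Copies R F1 Set.univ ∨ Copies (G \ R) F2 Set.univ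

/-- Vertex Folkman number for a family of target graphs. -/
noncomputable def Fv {r : ℕ} {β : Fin r → Type*} (F : ∀ i, SimpleGraph (β i)) (k : ℕ) : ℕ :=
  sInf {n | ∃ G : SimpleGraph (Fin n), G.CliqueFree k ∧ VArrows G F}

/-- Two-color vertex Folkman number. -/
noncomputable def Fv2 {β γ : Type*} (F1 : SimpleGraph β) (F2 : SimpleGraph γ) (k : ℕ) : ℕ :=
  sInf {n | ∃ G : SimpleGraph (Fin n), G.CliqueFree k ∧ VArrows2 G F1 F2}

/-- Two-color edge Folkman number. -/
noncomputable def Fe2 {β γ : Type*} (F1 : SimpleGraph β) (F2 : SimpleGraph γ) (k : ℕ) : ℕ :=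
  sInf {n | ∃ G : SimpleGraph (Fin n), G.CliqueFree k ∧ EArrows2 G F1 F2}

/-- Lexicographic product `G[H]`. -/
def lexProd {α β : Type*} (G : SimpleGraph α) (H : SimpleGraph β) : SimpleGraph (α × β) where
  Adj x y := G.Adj x.1 y.1 ∨ (x.1 = y.1 ∧ H.Adj x.2 y.2)
  symm := by constructor; rintro x y (h | ⟨e, h⟩); exacts [Or.inl h.symm, Or.inr ⟨e.symm, h.symm⟩]
  loopless := by constructor; rintro x (h | ⟨_, h⟩); exacts [G.irrefl h, H.irrefl h]

/-- Complete graph on `k` vertices. -/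
def Kc (k : ℕ) : SimpleGraph (Fin k) := completeGraph (Fin k)

/-- `J_k = K_k - e`: complete graph on `k` vertices minus one edge (the one
joining the two distinguished right-hand vertices). -/
def Jgraph (k : ℕ) : SimpleGraph (Fin (k - 2) ⊕ Fin 2) where
  Adj x y := x ≠ y ∧ ¬(x.isRight ∧ y.isRight)
  symm := ⟨fun x y ⟨h1, h2⟩ => ⟨h1.symm, fun ⟨a, b⟩ => h2 ⟨b, a⟩⟩⟩
  loopless := ⟨fun x h => h.1 rfl⟩

/-- Cycle on `n` vertices. -/
def cycle (n : ℕ) : SimpleGraph (ZMod n) where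
  Adj i j := i ≠ j ∧ (i - j = 1 ∨ j - i = 1)
  symm := ⟨fun i j ⟨h1, h2⟩ => ⟨h1.symm, h2.symm⟩⟩
  loopless := ⟨fun i h => h.1 rfl⟩

/-- Join of two graphs: disjoint union plus all cross edges. -/
def graphJoin {α β : Type*} (G : SimpleGraph α) (H : SimpleGraph β) :
    SimpleGraph (α ⊕ β) where
  Adj x y := (∃ a b, x = .inl a ∧ y = .inl b ∧ G.Adj a b) ∨
             (∃ a b, x = .inr a ∧ y = .inr b ∧ H.Adj a b) ∨
             (x.isLeft ∧ y.isRight) ∨ (x.isRight ∧ y.isLeft)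
  symm := by
    constructor
    rintro x y (⟨a, b, rfl, rfl, h⟩ | ⟨a, b, rfl, rfl, h⟩ | ⟨h1, h2⟩ | ⟨h1, h2⟩)
    · exact Or.inl ⟨b, a, rfl, rfl, h.symm⟩
    · exact Or.inr (Or.inl ⟨b, a, rfl, rfl, h.symm⟩)
    · exact Or.inr (Or.inr (Or.inr ⟨h2, h1⟩))
    · exact Or.inr (Or.inr (Or.inl ⟨h2, h1⟩))
  loopless := by
    constructor
    rintro x (⟨a, b, rfl, h, h'⟩ | ⟨a, b, rfl, h, h'⟩ | ⟨h1, h2⟩ | ⟨h1, h2⟩)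
    · cases h; exact G.irrefl h'
    · cases h; exact H.irrefl h'
    · cases x <;> simp_all
    · cases x <;> simp_all

/-- Clique number: the largest size of a clique. -/
noncomputable def cliqueNum' {α : Type*} (G : SimpleGraph α) : ℕ :=
  sSup {n | ∃ s : Finset α, G.IsNClique n s}

/-!
Blow up the five-cycle: place the Wagner graph `W`, a nine-vertex subgraph `H` of `C₅[2K₁]`,
`C₅`, `H`, `C₅` (in this cyclic order) at the vertices of `C₅` and join blocks sitting at
adjacent vertices completely. Every block is triangle-free and so is the frame, so a clique meets
at most two blocks, in at most two vertices each: the graph is `K₅`-free. In a 2-colouring, each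
`C₅` has a monochromatic edge, each `H` a monochromatic cherry `J₃`, and `W`, for each colour,
an edge of that colour or a cherry of the other one. As `J₅ = K₂ + J₃`, an edge and a cherry of the same colour in
adjacent blocks give a monochromatic `J₅`, and a short case analysis always finds such a pair.
The blocks have `8 + 9 + 5 + 9 + 5 = 36` vertices.
-/

instance (n : ℕ) : DecidableRel (cycle n).Adj :=
  fun _ _ => inferInstanceAs (Decidable (_ ∧ _))

instance {α β : Type*} [DecidableEq α] (G : SimpleGraph α) (H : SimpleGraph β)
    [DecidableRel G.Adj] [DecidableRel H.Adj] : DecidableRel (lexProd G H).Adj :=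
  fun _ _ => inferInstanceAs (Decidable (_ ∨ _))

section Copies

variable {α α' β β' γ : Type*} {G : SimpleGraph α} {F : SimpleGraph β} {S T : Set α}

theorem Copies.mono (h : Copies G F S) (hST : S ⊆ T) : Copies G F T :=
  let ⟨f, hf, hS⟩ := h
  ⟨f, hf, fun a => hST (hS a)⟩

theorem Copies.of_isContained {F' : SimpleGraph β'} (hF : F' ⊑ F) (h : Copies G F S) :
    Copies G F' S :=
  let ⟨ψ⟩ := hF
  let ⟨f, hf, hS⟩ := h
  ⟨ψ.toEmbedding.trans f, fun _ _ hab => hf _ _ (ψ.toHom.map_adj hab), fun _ => hS _⟩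

theorem Copies.map {G' : SimpleGraph α'} (φ : Copy G G') {T' : Set α'} (hST : Set.MapsTo φ S T')
    (h : Copies G F S) : Copies G' F T' :=
  let ⟨f, hf, hS⟩ := h
  ⟨f.trans φ.toEmbedding, fun _ _ hab => φ.toHom.map_adj (hf _ _ hab), fun _ => hST (hS _)⟩

theorem copies_of_injective (f : β → α) (hf : f.Injective)
    (hadj : ∀ a b, F.Adj a b → G.Adj (f a) (f b)) (hS : ∀ a, f a ∈ S) : Copies G F S :=
  ⟨⟨f, hf⟩, hadj, hS⟩

theorem copies_kc_two {u v : α} (huv : G.Adj u v) (hu : u ∈ S) (hv : v ∈ S) :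
    Copies G (Kc 2) S := by
  refine copies_of_injective ![u, v] (fun a b hab => ?_) (fun a b hab => ?_) (fun a => ?_) <;>
    fin_cases a <;> try fin_cases b
  all_goals simp_all [Kc, huv.ne, huv.ne.symm, huv.symm]

theorem copies_jgraph_three {u v w : α} (huv : G.Adj u v) (huw : G.Adj u w) (hvw : v ≠ w)
    (hu : u ∈ S) (hv : v ∈ S) (hw : w ∈ S) : Copies G (Jgraph 3) S := by
  refine copies_of_injective (Sum.elim (fun _ => u) ![v, w]) (fun a b hab => ?_)
    (fun a b hab => ?_) (fun a => ?_)
  · rcases a with a | a <;> rcases b with b | b <;> fin_cases a <;> fin_cases b <;>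
      simp_all [huv.ne, huw.ne, hvw.symm]
  · rcases a with a | a <;> rcases b with b | b <;> fin_cases a <;> fin_cases b <;>
      simp_all [Jgraph, huv.symm, huw.symm]
  · rcases a with a | a <;> fin_cases a <;> assumption

@[simp] theorem graphJoin_adj_inl_inl {G : SimpleGraph β} {H : SimpleGraph γ} {a b : β} :
    (graphJoin G H).Adj (.inl a) (.inl b) ↔ G.Adj a b := by
  simp [graphJoin]

@[simp] theorem graphJoin_adj_inr_inr {G : SimpleGraph β} {H : SimpleGraph γ} {a b : γ} :
    (graphJoin G H).Adj (.inr a) (.inr b) ↔ H.Adj a b := by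
  simp [graphJoin]

@[simp] theorem graphJoin_adj_inl_inr {G : SimpleGraph β} {H : SimpleGraph γ} {a : β} {b : γ} :
    (graphJoin G H).Adj (.inl a) (.inr b) := by
  simp [graphJoin]

@[simp] theorem graphJoin_adj_inr_inl {G : SimpleGraph β} {H : SimpleGraph γ} {a : γ} {b : β} :
    (graphJoin G H).Adj (.inr a) (.inl b) := by
  simp [graphJoin]

theorem Copies.graphJoin {F₁ : SimpleGraph β} {F₂ : SimpleGraph γ} {T₁ T₂ : Set α}
    (hT : ∀ x ∈ T₁, ∀ y ∈ T₂, G.Adj x y) (h₁ : Copies G F₁ (S ∩ T₁))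
    (h₂ : Copies G F₂ (S ∩ T₂)) : Copies G (graphJoin F₁ F₂) S := by
  obtain ⟨f₁, hf₁, hS₁⟩ := h₁
  obtain ⟨f₂, hf₂, hS₂⟩ := h₂
  have cross a b : G.Adj (f₁ a) (f₂ b) := hT _ (hS₁ a).2 _ (hS₂ b).2
  refine ⟨⟨Sum.elim f₁ f₂, f₁.injective.sumElim f₂.injective fun a b => (cross a b).ne⟩, ?_, ?_⟩
  · rintro (a | a) (b | b) hab
    · exact hf₁ a b (by simpa using hab)
    · exact cross a b
    · exact (cross b a).symm
    · exact hf₂ a b (by simpa using hab)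
  · rintro (a | a)
    exacts [(hS₁ a).1, (hS₂ a).1]

theorem jgraph_five_isContained_graphJoin : Jgraph 5 ⊑ graphJoin (Kc 2) (Jgraph 3) := by
  let f : Fin (5 - 2) ⊕ Fin 2 → Fin 2 ⊕ (Fin (3 - 2) ⊕ Fin 2) :=
    Sum.elim ![.inl 0, .inl 1, .inr (.inl 0)] (.inr ∘ .inr)
  refine ⟨⟨⟨f, fun {a b} hab => ?_⟩, fun a b hab => ?_⟩⟩
  · rcases a with a | a <;> rcases b with b | b <;> fin_cases a <;> fin_cases b <;>
      simp [f, Jgraph, Kc] at hab ⊢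
  · revert a b
    decide

theorem copies_jgraph_five_of_adj {ι : Type*} {Γ : SimpleGraph ι} {π : α → ι}
    (hG : Γ.comap π ≤ G) {i j : ι} (hij : Γ.Adj i j)
    (h₁ : Copies G (Kc 2) (S ∩ π ⁻¹' {i})) (h₂ : Copies G (Jgraph 3) (S ∩ π ⁻¹' {j})) :
    Copies G (Jgraph 5) S :=
  (Copies.graphJoin (fun x hx y hy => hG (by simp_all)) h₁ h₂).of_isContained
    jgraph_five_isContained_graphJoin


variable {β₁ β₂ : Type*} {F₁ : SimpleGraph β₁} {F₂ : SimpleGraph β₂}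

theorem VArrows2.symm (h : VArrows2 G F₁ F₂) : VArrows2 G F₂ F₁ := fun C =>
  (h (fun v => !C v)).symm.imp (·.mono fun _ => by simp) (·.mono fun _ => by simp)

theorem VArrows2.of_copy {G' : SimpleGraph α'} (φ : Copy G G') (h : VArrows2 G F₁ F₂) :
    VArrows2 G' F₁ F₂ := fun C =>
  (h (C ∘ φ)).imp (Copies.map φ fun _ => id) (Copies.map φ fun _ => id)

theorem VArrows2.copies_inter_fibre {ι : Type*} {G' : SimpleGraph α'} (h : VArrows2 G F₁ F₂)
    (φ : Copy G G') {π : α' → ι} {i : ι} (hφ : ∀ v, π (φ v) = i) (C : α' → Bool) :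
    Copies G' F₁ ({v | C v = true} ∩ π ⁻¹' {i}) ∨
      Copies G' F₂ ({v | C v = false} ∩ π ⁻¹' {i}) :=
  (h (C ∘ φ)).imp (Copies.map φ fun v hv => ⟨hv, hφ v⟩) (Copies.map φ fun v hv => ⟨hv, hφ v⟩)

end Copies

namespace SimpleGraph

variable {V W ι : Type*}

theorem IsClique.card_le_of_cliqueFree {G : SimpleGraph V} {s : Finset V} {n : ℕ}
    (hs : G.IsClique (s : Set V)) (hG : G.CliqueFree (n + 1)) : s.card ≤ n := by
  by_contra! hn
  obtain ⟨t, hts, ht⟩ := Finset.exists_subset_card_eq hn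
  exact hG t ⟨hs.subset (by simpa using hts), ht⟩

theorem CliqueFree.sum {G : SimpleGraph V} {H : SimpleGraph W} {n : ℕ} (hG : G.CliqueFree n)
    (hH : H.CliqueFree n) : (G ⊕g H).CliqueFree n := by
  intro s hs
  have hl : G.IsClique (s.toLeft : Set V) := fun a ha b hb hab => by
    simpa using hs.1 (Finset.mem_toLeft.1 ha) (Finset.mem_toLeft.1 hb) (by simpa using hab)
  have hr : H.IsClique (s.toRight : Set W) := fun a ha b hb hab => by
    simpa using hs.1 (Finset.mem_toRight.1 ha) (Finset.mem_toRight.1 hb) (by simpa using hab)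
  have hcard := Finset.card_toLeft_add_card_toRight (u := s)
  rcases s.toLeft.eq_empty_or_nonempty with hL | ⟨a, ha⟩
  · exact hH _ ⟨hr, by simpa [hL, hs.2] using hcard⟩
  rcases s.toRight.eq_empty_or_nonempty with hR | ⟨b, hb⟩
  · exact hG _ ⟨hl, by simpa [hR, hs.2] using hcard⟩
  exact not_adj_sum_inl_inr (G := G) (H := H) a b
    (hs.1 (Finset.mem_toLeft.1 ha) (Finset.mem_toRight.1 hb) Sum.inl_ne_inr)

theorem cliqueFree_sup_comap {L : SimpleGraph V} {Γ : SimpleGraph ι} {π : V → ι} {p m : ℕ}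
    (hπ : ∀ ⦃x y⦄, L.Adj x y → π x = π y) (hΓ : Γ.CliqueFree (p + 1))
    (hL : L.CliqueFree (m + 1)) : (L ⊔ Γ.comap π).CliqueFree (p * m + 1) := by
  classical
  intro s hs
  have hadj {x y} (hx : x ∈ s) (hy : y ∈ s) (hxy : x ≠ y) : L.Adj x y ∨ Γ.Adj (π x) (π y) :=
    hs.1 hx hy hxy
  have himage : (s.image π).card ≤ p := by
    refine IsClique.card_le_of_cliqueFree (fun i hi j hj hij => ?_) hΓ
    obtain ⟨x, hx, rfl⟩ := Finset.mem_image.1 hi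
    obtain ⟨y, hy, rfl⟩ := Finset.mem_image.1 hj
    exact (hadj hx hy (ne_of_apply_ne π hij)).resolve_left fun h => hij (hπ h)
  have hfibre : ∀ i ∈ s.image π, (s.filter fun x => π x = i).card ≤ m := by
    refine fun i _ => IsClique.card_le_of_cliqueFree (fun x hx y hy hxy => ?_) hL
    simp only [Finset.coe_filter] at hx hy
    exact (hadj hx.1 hy.1 hxy).resolve_right (by simp [hx.2, hy.2])
  have hcard := (Finset.card_le_mul_card_image s m hfibre).trans (Nat.mul_le_mul_left m himage)
  rw [hs.2, mul_comm] at hcard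
  exact Nat.not_succ_le_self _ hcard

theorem cliqueFree_three_of_forall {G : SimpleGraph V}
    (h : ∀ a b c, G.Adj a b → G.Adj a c → ¬G.Adj b c) : G.CliqueFree 3 := fun _ hs => by
  classical
  obtain ⟨a, b, c, hab, hac, hbc, -⟩ := is3Clique_iff.1 hs
  exact h a b c hab hac hbc

end SimpleGraph

section SmallGraphs

variable {α : Type*} {G : SimpleGraph α}

theorem vArrows2_kc_two_of_forall (h : ∀ C : α → Bool, ∃ u v, G.Adj u v ∧ C v = C u) :
    VArrows2 G (Kc 2) (Kc 2) := fun C => by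
  obtain ⟨u, v, huv, hvu⟩ := h C
  cases hu : C u
  · exact .inr (copies_kc_two huv hu (hvu.trans hu))
  · exact .inl (copies_kc_two huv hu (hvu.trans hu))

theorem vArrows2_jgraph_three_of_forall
    (h : ∀ C : α → Bool, ∃ u v w, G.Adj u v ∧ G.Adj u w ∧ v ≠ w ∧ C v = C u ∧ C w = C u) :
    VArrows2 G (Jgraph 3) (Jgraph 3) := fun C => by
  obtain ⟨u, v, w, huv, huw, hvw, hv, hw⟩ := h C
  cases hu : C u
  · exact .inr (copies_jgraph_three huv huw hvw hu (hv.trans hu) (hw.trans hu))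
  · exact .inl (copies_jgraph_three huv huw hvw hu (hv.trans hu) (hw.trans hu))

theorem cycle_five_cliqueFree_three : (cycle 5).CliqueFree 3 :=
  cliqueFree_three_of_forall (by decide +kernel)

theorem cycle_five_vArrows2 : VArrows2 (cycle 5) (Kc 2) (Kc 2) :=
  vArrows2_kc_two_of_forall (by decide +kernel)

def cycleFiveLexMinusVertex : SimpleGraph {x : ZMod 5 × Fin 2 // x ≠ (0, 1)} :=
  (lexProd (cycle 5) ⊥).induce {x | x ≠ (0, 1)}

instance : DecidableRel cycleFiveLexMinusVertex.Adj :=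
  fun x y => inferInstanceAs (Decidable ((lexProd (cycle 5) ⊥).Adj x.1 y.1))

theorem cycleFiveLexMinusVertex_cliqueFree_three : cycleFiveLexMinusVertex.CliqueFree 3 :=
  cliqueFree_three_of_forall (by decide +kernel)

theorem cycleFiveLexMinusVertex_vArrows2 :
    VArrows2 cycleFiveLexMinusVertex (Jgraph 3) (Jgraph 3) :=
  vArrows2_jgraph_three_of_forall (by decide +kernel)

def wagnerGraph : SimpleGraph (ZMod 8) := circulantGraph {1, 4}

instance : DecidableRel wagnerGraph.Adj :=
  inferInstanceAs (DecidableRel (circulantGraph _).Adj)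

theorem wagnerGraph_cliqueFree_three : wagnerGraph.CliqueFree 3 :=
  cliqueFree_three_of_forall (by decide +kernel)

theorem wagnerGraph_vArrows2 : VArrows2 wagnerGraph (Kc 2) (Jgraph 3) := fun C => by
  obtain ⟨u, v, huv, hu, hv⟩ | ⟨u, v, w, huv, huw, hvw, hu, hv, hw⟩ :
      (∃ u v, wagnerGraph.Adj u v ∧ C u = true ∧ C v = true) ∨
        ∃ u v w, wagnerGraph.Adj u v ∧ wagnerGraph.Adj u w ∧ v ≠ w ∧
          C u = false ∧ C v = false ∧ C w = false := by
    revert C; decide +kernel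
  exacts [.inl (copies_kc_two huv hu hv), .inr (copies_jgraph_three huv huw hvw hu hv hw)]

end SmallGraphs

theorem cycle_five_exists_adj_edge_cherry {Edge Cherry : ZMod 5 → Bool → Prop}
    (h₀ : ∀ b, Edge 0 b ∨ Cherry 0 (!b)) (h₁ : ∃ b, Cherry 1 b) (h₂ : ∃ b, Edge 2 b)
    (h₃ : ∃ b, Cherry 3 b) (h₄ : ∃ b, Edge 4 b) :
    ∃ i j b, (cycle 5).Adj i j ∧ Edge i b ∧ Cherry j b := by
  obtain ⟨a, e₂⟩ := h₂
  obtain ⟨b₁, r₁⟩ := h₁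
  obtain ⟨b₃, r₃⟩ := h₃
  by_cases hb₁ : b₁ = a
  · exact ⟨2, 1, a, by decide, e₂, hb₁ ▸ r₁⟩
  by_cases hb₃ : b₃ = a
  · exact ⟨2, 3, a, by decide, e₂, hb₃ ▸ r₃⟩
  rw [Bool.eq_not.2 hb₁] at r₁
  rw [Bool.eq_not.2 hb₃] at r₃
  rcases h₀ (!a) with e₀ | r₀
  · exact ⟨0, 1, !a, by decide, e₀, r₁⟩
  rw [Bool.not_not] at r₀
  obtain ⟨c, e₄⟩ := h₄
  by_cases hc : c = a
  · exact ⟨4, 0, a, by decide, hc ▸ e₄, r₀⟩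
  · exact ⟨4, 3, !a, by decide, Bool.eq_not.2 hc ▸ e₄, r₃⟩

section CycleFiveBlowup

variable {V₀ V₁ V₂ V₃ V₄ : Type*}

def cycleFiveBlock : V₀ ⊕ V₁ ⊕ V₂ ⊕ V₃ ⊕ V₄ → ZMod 5 :=
  Sum.elim (fun _ => 0) <| Sum.elim (fun _ => 1) <| Sum.elim (fun _ => 2) <|
    Sum.elim (fun _ => 3) fun _ => 4

def cycleFiveBlowup (W : SimpleGraph V₀) (H₁ : SimpleGraph V₁) (C₁ : SimpleGraph V₂)
    (H₂ : SimpleGraph V₃) (C₂ : SimpleGraph V₄) : SimpleGraph (V₀ ⊕ V₁ ⊕ V₂ ⊕ V₃ ⊕ V₄) :=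
  (W ⊕g (H₁ ⊕g (C₁ ⊕g (H₂ ⊕g C₂)))) ⊔ (cycle 5).comap cycleFiveBlock

variable {W : SimpleGraph V₀} {H₁ : SimpleGraph V₁} {C₁ : SimpleGraph V₂}
  {H₂ : SimpleGraph V₃} {C₂ : SimpleGraph V₄}

theorem cycleFiveBlowup_cliqueFree (hW : W.CliqueFree 3) (hH₁ : H₁.CliqueFree 3)
    (hC₁ : C₁.CliqueFree 3) (hH₂ : H₂.CliqueFree 3) (hC₂ : C₂.CliqueFree 3) :
    (cycleFiveBlowup W H₁ C₁ H₂ C₂).CliqueFree 5 := by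
  refine cliqueFree_sup_comap (p := 2) (m := 2) ?_ cycle_five_cliqueFree_three
    (hW.sum (hH₁.sum (hC₁.sum (hH₂.sum hC₂))))
  rintro (x | x | x | x | x) (y | y | y | y | y) h <;> simp_all [cycleFiveBlock]

theorem cycleFiveBlowup_vArrows2 (hW : VArrows2 W (Kc 2) (Jgraph 3))
    (hH₁ : VArrows2 H₁ (Jgraph 3) (Jgraph 3)) (hC₁ : VArrows2 C₁ (Kc 2) (Kc 2))
    (hH₂ : VArrows2 H₂ (Jgraph 3) (Jgraph 3)) (hC₂ : VArrows2 C₂ (Kc 2) (Kc 2)) :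
    VArrows2 (cycleFiveBlowup W H₁ C₁ H₂ C₂) (Jgraph 5) (Jgraph 5) := by
  intro C
  let G := cycleFiveBlowup W H₁ C₁ H₂ C₂
  let hL : Copy (W ⊕g (H₁ ⊕g (C₁ ⊕g (H₂ ⊕g C₂)))) G := Copy.ofLE _ _ le_sup_left
  let mono {β : Type} (F : SimpleGraph β) (i : ZMod 5) (b : Bool) : Prop :=
    Copies G F ({v | C v = b} ∩ cycleFiveBlock ⁻¹' {i})
  have exists_bool {β : Type} {F : SimpleGraph β} {i : ZMod 5} :
      mono F i true ∨ mono F i false → ∃ b, mono F i b := fun h => h.elim (⟨_, ·⟩) (⟨_, ·⟩)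
  suffices ∃ i j b, (cycle 5).Adj i j ∧ mono (Kc 2) i b ∧ mono (Jgraph 3) j b by
    obtain ⟨i, j, b, hij, e, r⟩ := this
    have := copies_jgraph_five_of_adj le_sup_right hij e r
    cases b
    exacts [Or.inr this, Or.inl this]
  apply cycle_five_exists_adj_edge_cherry
  · rintro (_ | _)
    · exact (hW.symm.copies_inter_fibre (hL.comp Embedding.sumInl.toCopy) (fun _ => rfl) C).symm
    · exact hW.copies_inter_fibre (hL.comp Embedding.sumInl.toCopy) (fun _ => rfl) C
  · exact exists_bool (hH₁.copies_inter_fibre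
      (hL.comp (Embedding.sumInr.toCopy.comp Embedding.sumInl.toCopy)) (fun _ => rfl) C)
  · exact exists_bool (hC₁.copies_inter_fibre
      (hL.comp (Embedding.sumInr.toCopy.comp (Embedding.sumInr.toCopy.comp
        Embedding.sumInl.toCopy))) (fun _ => rfl) C)
  · exact exists_bool (hH₂.copies_inter_fibre
      (hL.comp (Embedding.sumInr.toCopy.comp (Embedding.sumInr.toCopy.comp
        (Embedding.sumInr.toCopy.comp Embedding.sumInl.toCopy)))) (fun _ => rfl) C)
  · exact exists_bool (hC₂.copies_inter_fibre
      (hL.comp (Embedding.sumInr.toCopy.comp (Embedding.sumInr.toCopy.comp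
        (Embedding.sumInr.toCopy.comp Embedding.sumInr.toCopy)))) (fun _ => rfl) C)

end CycleFiveBlowup

section FolkmanNumbers

variable {V β γ : Type*} {F₁ : SimpleGraph β} {F₂ : SimpleGraph γ} {k : ℕ}

theorem exists_fin_card_of_vArrows2 [Fintype V] {G : SimpleGraph V} (hk : G.CliqueFree k)
    (hG : VArrows2 G F₁ F₂) :
    ∃ G' : SimpleGraph (Fin (Fintype.card V)), G'.CliqueFree k ∧ VArrows2 G' F₁ F₂ :=
  let e := Iso.map (Fintype.equivFin V) G
  ⟨_, hk.comap ⟨e.symm.toCopy⟩, hG.of_copy e.toCopy⟩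

theorem fv2_le_card [Fintype V] {G : SimpleGraph V} (hk : G.CliqueFree k)
    (hG : VArrows2 G F₁ F₂) : Fv2 F₁ F₂ k ≤ Fintype.card V :=
  Nat.sInf_le (exists_fin_card_of_vArrows2 hk hG)

theorem fv2_jgraph_five_le
    (hK : ∃ n, ∃ G : SimpleGraph (Fin n), G.CliqueFree 3 ∧ VArrows2 G (Kc 2) (Kc 2))
    (hJ : ∃ n, ∃ G : SimpleGraph (Fin n), G.CliqueFree 3 ∧ VArrows2 G (Jgraph 3) (Jgraph 3))
    (hKJ : ∃ n, ∃ G : SimpleGraph (Fin n), G.CliqueFree 3 ∧ VArrows2 G (Kc 2) (Jgraph 3)) :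
    Fv2 (Jgraph 5) (Jgraph 5) 5 ≤
      2 * Fv2 (Kc 2) (Kc 2) 3 + 2 * Fv2 (Jgraph 3) (Jgraph 3) 3 + Fv2 (Kc 2) (Jgraph 3) 3 := by
  obtain ⟨C, hC₃, hC⟩ := Nat.sInf_mem hK
  obtain ⟨H, hH₃, hH⟩ := Nat.sInf_mem hJ
  obtain ⟨W, hW₃, hW⟩ := Nat.sInf_mem hKJ
  calc Fv2 (Jgraph 5) (Jgraph 5) 5
      ≤ Fintype.card (Fin (Fv2 (Kc 2) (Jgraph 3) 3) ⊕ Fin (Fv2 (Jgraph 3) (Jgraph 3) 3) ⊕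
          Fin (Fv2 (Kc 2) (Kc 2) 3) ⊕ Fin (Fv2 (Jgraph 3) (Jgraph 3) 3) ⊕
          Fin (Fv2 (Kc 2) (Kc 2) 3)) :=
        fv2_le_card (cycleFiveBlowup_cliqueFree hW₃ hH₃ hC₃ hH₃ hC₃)
          (cycleFiveBlowup_vArrows2 hW hH hC hH hC)
    _ = _ := by simp only [Fintype.card_sum, Fintype.card_fin]; ring

end FolkmanNumbers

/-- `F_v(J_5, J_5; 5) ≤ 36`. -/
theorem Fv_J5_J5_le_36 : Fv2 (Jgraph 5) (Jgraph 5) 5 ≤ 36 := by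
  have hK := exists_fin_card_of_vArrows2 cycle_five_cliqueFree_three cycle_five_vArrows2
  have hJ := exists_fin_card_of_vArrows2 cycleFiveLexMinusVertex_cliqueFree_three
    cycleFiveLexMinusVertex_vArrows2
  have hKJ := exists_fin_card_of_vArrows2 wagnerGraph_cliqueFree_three wagnerGraph_vArrows2
  calc Fv2 (Jgraph 5) (Jgraph 5) 5
      ≤ 2 * Fv2 (Kc 2) (Kc 2) 3 + 2 * Fv2 (Jgraph 3) (Jgraph 3) 3 + Fv2 (Kc 2) (Jgraph 3) 3 :=
        fv2_jgraph_five_le ⟨_, hK⟩ ⟨_, hJ⟩ ⟨_, hKJ⟩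
    _ ≤ 2 * 5 + 2 * 9 + 8 := by
        gcongr
        · exact (Nat.sInf_le hK).trans_eq (ZMod.card 5)
        · exact (Nat.sInf_le hJ).trans_eq rfl
        · exact (Nat.sInf_le hKJ).trans_eq (ZMod.card 8)
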